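/- arXiv:1210.7262 — 4 statements merged into one kernel-verified Lean document; each statement's English description precedes it below -/
import Mathlib

section
/- Let (X,d) be a length space, let n ≥ 5 be an integer, and suppose (X,d) satisfies the C-rough n-point condition for some C ≥ 0. Then (X,d) is C'-rCAT(0), where C' = C + 2√3. -/
noncomputable section

/-- The Euclidean plane with the Euclidean metric. -/
abbrev E2 : Type := EuclideanSpace ℝ (Fin 2)

/-- The length of the path `γ` between parameter values `a` and `b`. -/
noncomputable def pathLen {X : Type*} [MetricSpace X] (γ : ℝ → X) (a b : ℝ) : ℝ :=
  (eVariationOn γ (Set.Icc a b)).toReal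

/-- An `h`-short segment from `x` to `y`: a rectifiable path `γ : [0,L] → X`
with `γ 0 = x`, `γ L = y` and `len γ ≥ d(x,y) ≥ len γ - h`. -/
structure ShortSeg {X : Type*} [MetricSpace X] (h : ℝ) (x y : X) where
  L : ℝ
  L_nonneg : 0 ≤ L
  γ : ℝ → X
  src : γ 0 = x
  tgt : γ L = y
  rect : eVariationOn γ (Set.Icc 0 L) ≠ ⊤
  short₁ : dist x y ≤ pathLen γ 0 L
  short₂ : pathLen γ 0 L - h ≤ dist x y

/-- A length space: any two points are joined by an `h`-short segment, for every `h > 0`. -/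
def IsLengthSpace (X : Type*) [MetricSpace X] : Prop :=
  ∀ x y : X, ∀ h : ℝ, 0 < h → Nonempty (ShortSeg h x y)

/-- `u` lies on an `h`-short side from `a` to `b`, with comparison point `uc` on the
Euclidean segment `[ac, bc]`. -/
def SidePoint {X : Type*} [MetricSpace X] (h : ℝ) (a b : X) (ac bc : E2)
    (u : X) (uc : E2) : Prop :=
  ∃ (s : ShortSeg h a b) (t : ℝ), t ∈ Set.Icc 0 s.L ∧ s.γ t = u ∧
    uc ∈ segment ℝ ac bc ∧ dist ac uc ≤ pathLen s.γ 0 t ∧ dist uc bc ≤ pathLen s.γ t s.L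

/-- The `C`-rough CAT(0) condition relative to the function `H`: for every `h`-short
triangle with `h = H x y z`, every comparison triangle in `ℝ²`, and points `u, v` on
two different sides of the triangle with comparison points `uc, vc`, one has
`d(u,v) ≤ |uc - vc| + C`. -/
def RCatWith {X : Type*} [MetricSpace X] (C : ℝ) (H : X → X → X → ℝ) : Prop :=
  ∀ x y z : X, ∀ xc yc zc : E2,
    dist xc yc = dist x y → dist yc zc = dist y z → dist zc xc = dist z x →
    ∀ u v : X, ∀ uc vc : E2,
      ((SidePoint (H x y z) x y xc yc u uc ∧ SidePoint (H x y z) y z yc zc v vc) ∨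
       (SidePoint (H x y z) x y xc yc u uc ∧ SidePoint (H x y z) z x zc xc v vc) ∨
       (SidePoint (H x y z) y z yc zc u uc ∧ SidePoint (H x y z) z x zc xc v vc)) →
      dist u v ≤ dist uc vc + C

/-- The standard function `H(x,y,z) = 1/(1 ∨ d(x,y) ∨ d(x,z) ∨ d(y,z))`. -/
def StdH {X : Type*} [MetricSpace X] : X → X → X → ℝ :=
  fun x y z => 1 / (max 1 (max (dist x y) (max (dist x z) (dist y z))))

/-- `X` is `C`-rCAT(0). -/
def RCat (C : ℝ) (X : Type*) [MetricSpace X] : Prop :=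
  RCatWith C (StdH (X := X))

/-- `X` is `C`-hrCAT(0): it is `C`-rCAT(0;H) for some positive function `H`. -/
def HRCat (C : ℝ) (X : Type*) [MetricSpace X] : Prop :=
  ∃ H : X → X → X → ℝ, (∀ x y z, 0 < H x y z) ∧ RCatWith C H

/-- The `C`-rough `n`-point condition: every `n`-tuple `x₁, …, xₙ` (indexed cyclically
by `ZMod n`, with first point `x 1`) has a `C`-rough subembedding into `ℝ²`. -/
def RoughNPoint (C : ℝ) (n : ℕ) (X : Type*) [MetricSpace X] : Prop :=
  ∀ x : ZMod n → X, ∃ x' : ZMod n → E2,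
    (∀ i : ZMod n, dist (x i) (x (i - 1)) = dist (x' i) (x' (i - 1))) ∧
    (∀ i : ZMod n, dist (x 1) (x i) ≤ dist (x' 1) (x' i)) ∧
    (∀ i j : ZMod n, i ≠ 1 → j ≠ 1 → dist (x i) (x j) ≤ dist (x' i) (x' j) + C)

/-- `γ`, restricted to `[0, d(x,y)]`, is a unit-speed geodesic segment from `x` to `y`. -/
def IsGeodesicSeg {X : Type*} [MetricSpace X] (γ : ℝ → X) (x y : X) : Prop :=
  γ 0 = x ∧ γ (dist x y) = y ∧
    ∀ s ∈ Set.Icc (0:ℝ) (dist x y), ∀ t ∈ Set.Icc (0:ℝ) (dist x y),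
      dist (γ s) (γ t) = |s - t|

/-- A geodesic space: any two points are joined by a geodesic segment. -/
def GeodesicSpace (X : Type*) [MetricSpace X] : Prop :=
  ∀ x y : X, ∃ γ : ℝ → X, IsGeodesicSeg γ x y

/-- The CAT(0) comparison condition for geodesic triangles. -/
def IsCatZero (X : Type*) [MetricSpace X] : Prop :=
  ∀ x y z : X, ∀ γ₁ γ₂ : ℝ → X, IsGeodesicSeg γ₁ x y → IsGeodesicSeg γ₂ x z →
    ∀ xc yc zc : E2, dist xc yc = dist x y → dist yc zc = dist y z → dist zc xc = dist z x →
      ∀ s ∈ Set.Icc (0:ℝ) (dist x y), ∀ t ∈ Set.Icc (0:ℝ) (dist x z),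
        ∀ uc vc : E2, uc ∈ segment ℝ xc yc → vc ∈ segment ℝ xc zc →
          dist xc uc = s → dist xc vc = t → dist (γ₁ s) (γ₂ t) ≤ dist uc vc

/-- `X` is an `n`-point limit of the sequence of metric spaces `Y m`. -/
def IsNPointLimit (n : ℕ) (X : Type*) [MetricSpace X]
    (Y : ℕ → Type*) [∀ m, MetricSpace (Y m)] : Prop :=
  ∀ x : Fin n → X, ∀ ε : ℝ, 0 < ε →
    {m : ℕ | ∃ y : Fin n → Y m, ∀ i j : Fin n,
      |dist (x i) (x j) - dist (y i) (y j)| < ε}.Infinite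

/-!
Take an `h`-short triangle with `h = 1 / max(1, side lengths)`, so that every error term
`h · side` is at most `1`, and points `u ∈ [a,b]`, `v ∈ [a,c]` on two sides meeting at `a`, with
comparison points `ū, v̄`. The rough `n`-point condition applied to `(a, u, b, c, v, v, …, v)`
yields a Euclidean pentagon `a' u' b' c' v'` that does not stretch its sides, does not shrink the
diagonals `a'b'`, `a'c'`, and satisfies `d(u,v) ≤ |u'v'| + C`. As the sides of the triangle are
`h`-short, `|a'b'|` exceeds `|āb̄|` by at most `h`, and Stewart's theorem puts `u'` within
`√3 - λ/√2` of the point `p ∈ [a',b']` with `|a'p| = |āū|`, where `λ = |a'p| / |a'b'|`; likewise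
`v'` is within `√3 - μ/√2` of `q ∈ [a',c']`. Comparing the angles at `a'` and `ā` through the law
of cosines gives `|pq| ≤ |ūv̄| + (λ + μ)/√2`, hence `|u'v'| ≤ |ūv̄| + 2√3`.
-/

open AffineMap (lineMap)

-- With `γ`, `γ'` the angles opposite `D` in triangles with sides `A, B, D` and `e, f, D`, this
-- reads `cos γ ≤ cos γ' + 1 / (e f)`.
theorem mul_sq_add_sq_sub_sq_le {A B D e f h : ℝ} (hA : 0 ≤ A) (hB : 0 ≤ B)
    (hD : |A - B| ≤ D) (hhD : h * D ≤ 1) (hAe : A ≤ e) (he : e ≤ A + h) (hBf : B ≤ f)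
    (hf : f ≤ B + h) :
    e * f * (A ^ 2 + B ^ 2 - D ^ 2) ≤ A * B * (e ^ 2 + f ^ 2 - D ^ 2 + 2) := by
  have hΔ : 0 ≤ D ^ 2 - (A - B) ^ 2 := sub_nonneg.2 (sq_le_sq.2 (hD.trans (le_abs_self D)))
  have hst : (A - B) * ((f - B) - (e - A)) ≤ D * h :=
    calc (A - B) * ((f - B) - (e - A)) ≤ |A - B| * |(f - B) - (e - A)| :=
          (le_abs_self _).trans (abs_mul _ _).le
      _ ≤ D * h := mul_le_mul hD (abs_sub_le_iff.2 ⟨by linarith, by linarith⟩) (abs_nonneg _)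
          ((abs_nonneg _).trans hD)
  have hs : 0 ≤ e - A := by linarith
  have ht : 0 ≤ f - B := by linarith
  -- The difference of the two sides is `A B (2 - 2 (A - B) (t - s) + (t - s)²)`
  -- `+ (A t + B s + s t) (D² - (A - B)²)`, where `s = e - A` and `t = f - B`.
  linarith [mul_nonneg (mul_nonneg hA ht) hΔ, mul_nonneg (mul_nonneg hB hs) hΔ,
    mul_nonneg (mul_nonneg hs ht) hΔ, mul_nonneg (mul_nonneg hA hB)
      (show 0 ≤ 2 - 2 * ((A - B) * ((f - B) - (e - A))) + ((f - B) - (e - A)) ^ 2 by nlinarith)]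

theorem div_mul_div_mul_sq_add_sq_sub_sq_le {A B D e f h r ρ : ℝ} (hr : 0 ≤ r) (hρ : 0 ≤ ρ)
    (hrA : r ≤ A) (hρB : ρ ≤ B) (hD : |A - B| ≤ D) (hhD : h * D ≤ 1) (hAe : A ≤ e)
    (he : e ≤ A + h) (hBf : B ≤ f) (hf : f ≤ B + h) :
    r / A * (ρ / B) * (A ^ 2 + B ^ 2 - D ^ 2) ≤
      r / e * (ρ / f) * (e ^ 2 + f ^ 2 - D ^ 2 + 2) := by
  rcases hr.eq_or_lt with rfl | hr₀
  · simp
  rcases hρ.eq_or_lt with rfl | hρ₀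
  · simp
  have hA : 0 < A := hr₀.trans_le hrA
  have hB : 0 < B := hρ₀.trans_le hρB
  have key := mul_sq_add_sq_sub_sq_le hA.le hB.le hD hhD hAe he hBf hf
  rw [div_mul_div_comm, div_mul_div_comm, div_mul_eq_mul_div, div_mul_eq_mul_div,
    div_le_div_iff₀ (by positivity) (mul_pos (hA.trans_le hAe) (hB.trans_le hBf))]
  nlinarith [mul_le_mul_of_nonneg_left key (mul_nonneg hr hρ)]

theorem one_sub_mul_sq_add_mul_sq_le {p p' e A h t : ℝ} (ht₀ : 0 ≤ t) (ht₁ : t ≤ 1)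
    (hh : h ≤ 1) (hhA : h * A ≤ 1) (hAe : A ≤ e) (he : e ≤ p + p')
    (hside : max p (t * e) + max p' (A - t * e) ≤ A + h) :
    (1 - t) * p ^ 2 + t * p' ^ 2 - t * (1 - t) * e ^ 2 ≤ 1 + 2 * t * (1 - t) := by
  have hp := le_max_left p (t * e)
  have hte := le_max_right p (t * e)
  have hp' := le_max_left p' (A - t * e)
  have hAte := le_max_right p' (A - t * e)
  have hs₀ : 0 ≤ p + p' - e := by linarith
  have hs : (p + p' - e) + (e - A) ≤ h := by linarith
  have hse : (p + p' - e) * e ≤ 1 := by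
    rcases (show (0:ℝ) ≤ h by linarith).eq_or_lt with rfl | hh₀
    · rw [show p + p' - e = 0 by linarith, zero_mul]
      exact zero_le_one
    · refine le_of_mul_le_mul_left ?_ hh₀
      nlinarith [mul_le_mul_of_nonneg_left hhA hs₀,
        mul_le_mul_of_nonneg_right (show h * (p + p' - e) ≤ 1 by nlinarith)
          (show 0 ≤ e - A by linarith)]
  have h₁ : (p - t * e) ^ 2 ≤ 1 := by nlinarith
  have h₂ : (p' - (1 - t) * e) ^ 2 ≤ 1 := by nlinarith
  have h1t : 0 ≤ 1 - t := by linarith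
  have hid : (1 - t) * p ^ 2 + t * p' ^ 2 - t * (1 - t) * e ^ 2
      = (1 - t) * (p - t * e) ^ 2 + t * (p' - (1 - t) * e) ^ 2
        + 2 * t * (1 - t) * ((p + p' - e) * e) := by
    ring
  rw [hid]
  nlinarith [mul_le_mul_of_nonneg_left h₁ h1t, mul_le_mul_of_nonneg_left h₂ ht₀,
    mul_le_mul_of_nonneg_left hse (mul_nonneg ht₀ h1t)]

-- This is where `2√3` comes from: each side costs `√(1 + 2t(1 - t))`, which leaves room `t / √2`
-- for the error `(s + t) / √2` of `dist_lineMap_lineMap_le`.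
theorem one_add_two_mul_mul_one_sub_le_sq {t : ℝ} (ht₀ : 0 ≤ t) (ht₁ : t ≤ 1) :
    1 + 2 * t * (1 - t) ≤ (√3 - t / √2) ^ 2 := by
  have s3 : √3 ^ 2 = 3 := Real.sq_sqrt (by norm_num)
  have s2 : √2 ^ 2 = 2 := Real.sq_sqrt (by norm_num)
  have hc : (√3 / √2) ^ 2 = 3 / 2 := by rw [div_pow, s3, s2]
  have hc0 : 0 ≤ √3 / √2 := by positivity
  have expand : (√3 - t / √2) ^ 2 = 3 - 2 * t * (√3 / √2) + t ^ 2 / 2 := by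
    field_simp
    nlinarith [s3, s2]
  rw [expand]
  nlinarith [sq_nonneg (5 * t - 2 - 2 * (√3 / √2))]

theorem eq_lineMap_dist_div_of_mem_segment {E : Type*} [NormedAddCommGroup E]
    [NormedSpace ℝ E] {x y z : E} (h : z ∈ segment ℝ x y) :
    z = lineMap x y (dist x z / dist x y) := by
  rw [segment_eq_image_lineMap] at h
  obtain ⟨t, ⟨ht₀, -⟩, rfl⟩ := h
  rcases eq_or_ne x y with rfl | hxy
  · simp
  · rw [dist_left_lineMap, Real.norm_of_nonneg ht₀,
      mul_div_cancel_right₀ _ (dist_ne_zero.2 hxy)]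

-- The part of `SidePoint` that survives forgetting the path: it is symmetric in the endpoints
-- and persists when `dist a u` and `dist u b` decrease.
def SlackSidePoint {Y E : Type*} [PseudoMetricSpace Y] [SeminormedAddCommGroup E]
    [Module ℝ E] (h : ℝ) (a b : Y) (ac bc : E) (u : Y) (uc : E) : Prop :=
  uc ∈ segment ℝ ac bc ∧
    max (dist a u) (dist ac uc) + max (dist u b) (dist uc bc) ≤ dist ac bc + h

section Slack

variable {Y Y' E : Type*} [PseudoMetricSpace Y] [PseudoMetricSpace Y']
  [SeminormedAddCommGroup E] [Module ℝ E] {h : ℝ} {a b u : Y} {a' b' u' : Y'} {ac bc uc : E}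

theorem SlackSidePoint.symm (hu : SlackSidePoint h a b ac bc u uc) :
    SlackSidePoint h b a bc ac u uc := by
  obtain ⟨huc, hside⟩ := hu
  refine ⟨segment_symm ℝ ac bc ▸ huc, ?_⟩
  rw [dist_comm bc ac, dist_comm b u, dist_comm u a, dist_comm bc uc, dist_comm uc ac]
  linarith

theorem SlackSidePoint.mono (hu : SlackSidePoint h a b ac bc u uc)
    (ha : dist a' u' ≤ dist a u) (hb : dist u' b' ≤ dist u b) :
    SlackSidePoint h a' b' ac bc u' uc :=
  ⟨hu.1, (add_le_add (max_le_max ha le_rfl) (max_le_max hb le_rfl)).trans hu.2⟩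

end Slack

section InnerProductSpace

variable {E : Type*} [NormedAddCommGroup E] [InnerProductSpace ℝ E]

theorem dist_lineMap_lineMap_sq (a b c : E) (s t : ℝ) :
    dist (lineMap a b s) (lineMap a c t) ^ 2 = s ^ 2 * dist a b ^ 2 + t ^ 2 * dist a c ^ 2
      - s * t * (dist a b ^ 2 + dist a c ^ 2 - dist b c ^ 2) := by
  have hst : lineMap a b s - lineMap a c t = s • (b - a) - t • (c - a) := by
    simp only [AffineMap.lineMap_apply_module']
    abel
  rw [dist_eq_norm, dist_eq_norm, dist_eq_norm, dist_eq_norm, hst, norm_sub_rev a b,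
    norm_sub_rev a c, show b - c = (b - a) - (c - a) by abel,
    norm_sub_sq_real (s • (b - a)), norm_sub_sq_real (b - a), norm_smul, norm_smul,
    inner_smul_left, inner_smul_right]
  simp only [Real.norm_eq_abs, mul_pow, sq_abs, conj_trivial]
  ring

theorem dist_lineMap_sq (a b u : E) (t : ℝ) :
    dist u (lineMap a b t) ^ 2 =
      (1 - t) * dist a u ^ 2 + t * dist u b ^ 2 - t * (1 - t) * dist a b ^ 2 := by
  have h := dist_lineMap_lineMap_sq a b u t 1
  rw [AffineMap.lineMap_apply_one, dist_comm] at h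
  rw [h, dist_comm b u]
  ring

theorem SlackSidePoint.dist_lineMap_le {a b u ac bc uc : E} {h : ℝ}
    (hu : SlackSidePoint h a b ac bc u uc) (hh : h ≤ 1) (hhA : h * dist ac bc ≤ 1)
    (hA : dist ac bc ≤ dist a b) :
    dist u (lineMap a b (dist ac uc / dist a b)) ≤ √3 - dist ac uc / dist a b / √2 := by
  obtain ⟨huc, hside⟩ := hu
  have hsplit := dist_add_dist_of_mem_segment huc
  have hrA : dist ac uc ≤ dist a b := by linarith [dist_nonneg (x := uc) (y := bc)]
  have hte : dist ac uc / dist a b * dist a b = dist ac uc :=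
    div_mul_cancel_of_imp fun he => le_antisymm (he ▸ hrA) dist_nonneg
  set t := dist ac uc / dist a b
  have ht₀ : 0 ≤ t := by positivity
  have ht₁ : t ≤ 1 := div_le_one_of_le₀ hrA dist_nonneg
  have hsq : dist u (lineMap a b t) ^ 2 ≤ (√3 - t / √2) ^ 2 := by
    rw [dist_lineMap_sq]
    refine (one_sub_mul_sq_add_mul_sq_le ht₀ ht₁ hh hhA hA (dist_triangle a u b) ?_).trans
      (one_add_two_mul_mul_one_sub_le_sq ht₀ ht₁)
    rwa [hte, show dist ac bc - dist ac uc = dist uc bc by linarith]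
  have hpos : 0 ≤ √3 - t / √2 := by
    have h2 : 1 ≤ √2 := Real.one_le_sqrt.2 (by norm_num)
    have h3 : 1 ≤ √3 := Real.one_le_sqrt.2 (by norm_num)
    linarith [div_le_self ht₀ h2]
  exact (pow_le_pow_iff_left₀ dist_nonneg hpos two_ne_zero).1 hsq

theorem dist_lineMap_lineMap_le {a b c a' b' c' : E} {h r ρ : ℝ} (hr : 0 ≤ r)
    (hrb : r ≤ dist a b) (hρ : 0 ≤ ρ) (hρc : ρ ≤ dist a c)
    (hb : dist a b ≤ dist a' b') (hb' : dist a' b' ≤ dist a b + h)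
    (hc : dist a c ≤ dist a' c') (hc' : dist a' c' ≤ dist a c + h)
    (hbc : dist b' c' ≤ dist b c) (hh : h * dist b c ≤ 1) :
    dist (lineMap a' b' (r / dist a' b')) (lineMap a' c' (ρ / dist a' c')) ≤
      dist (lineMap a b (r / dist a b)) (lineMap a c (ρ / dist a c))
        + (r / dist a' b' + ρ / dist a' c') / √2 := by
  have hD : |dist a b - dist a c| ≤ dist b c := by
    simpa only [dist_comm a] using abs_dist_sub_le b c a
  have key := div_mul_div_mul_sq_add_sq_sub_sq_le hr hρ hrb hρc hD hh hb hb' hc hc'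
  have cancel : ∀ {x y : ℝ}, 0 ≤ x → x ≤ y → x / y * y = x := fun hx hxy =>
    div_mul_cancel_of_imp fun hy => le_antisymm (hy ▸ hxy) hx
  have e₁ := cancel hr hrb
  have e₂ := cancel hρ hρc
  have e₃ := cancel hr (hrb.trans hb)
  have e₄ := cancel hρ (hρc.trans hc)
  set s := r / dist a' b'
  set t := ρ / dist a' c'
  have hs : 0 ≤ s := by positivity
  have ht : 0 ≤ t := by positivity
  have hbc' : s * t * dist b' c' ^ 2 ≤ s * t * dist b c ^ 2 :=
    mul_le_mul_of_nonneg_left (pow_le_pow_left₀ dist_nonneg hbc 2) (mul_nonneg hs ht)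
  have hsq : dist (lineMap a' b' s) (lineMap a' c' t) ^ 2 ≤
      dist (lineMap a b (r / dist a b)) (lineMap a c (ρ / dist a c)) ^ 2
        + (s + t) ^ 2 / 2 := by
    rw [dist_lineMap_lineMap_sq, dist_lineMap_lineMap_sq, ← mul_pow, ← mul_pow, ← mul_pow,
      ← mul_pow, e₁, e₂, e₃, e₄]
    nlinarith [sq_nonneg (s - t)]
  have hs2 : ((s + t) / √2) ^ 2 = (s + t) ^ 2 / 2 := by
    rw [div_pow, Real.sq_sqrt zero_le_two]
  refine (pow_le_pow_iff_left₀ dist_nonneg (by positivity) two_ne_zero).1 (hsq.trans ?_)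
  nlinarith [mul_nonneg (dist_nonneg (x := lineMap a b (r / dist a b))
      (y := lineMap a c (ρ / dist a c))) (show 0 ≤ (s + t) / √2 by positivity)]

theorem SlackSidePoint.dist_le_add_two_sqrt_three {a b c u v ac bc cc uc vc : E} {h : ℝ}
    (hu : SlackSidePoint h a b ac bc u uc) (hv : SlackSidePoint h a c ac cc v vc)
    (hh : h ≤ 1) (hhb : h * dist ac bc ≤ 1) (hhc : h * dist ac cc ≤ 1)
    (hhbc : h * dist bc cc ≤ 1) (hb : dist ac bc ≤ dist a b) (hc : dist ac cc ≤ dist a c)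
    (hbc : dist b c ≤ dist bc cc) :
    dist u v ≤ dist uc vc + 2 * √3 := by
  have length_le {x y w : E} {xc yc wc : E} (hw : SlackSidePoint h x y xc yc w wc) :
      dist x y ≤ dist xc yc + h :=
    (dist_triangle x w y).trans
      ((add_le_add (le_max_left _ _) (le_max_left _ _)).trans hw.2)
  have on_side {x y w : E} (hw : w ∈ segment ℝ x y) : dist x w ≤ dist x y := by
    linarith [dist_add_dist_of_mem_segment hw, dist_nonneg (x := w) (y := y)]
  have hp := hu.dist_lineMap_le hh hhb hb
  have hq := hv.dist_lineMap_le hh hhc hc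
  have hpq := dist_lineMap_lineMap_le dist_nonneg (on_side hu.1) dist_nonneg (on_side hv.1)
    hb (length_le hu) hc (length_le hv) hbc hhbc
  rw [← eq_lineMap_dist_div_of_mem_segment hu.1, ← eq_lineMap_dist_div_of_mem_segment hv.1]
    at hpq
  rw [dist_comm] at hq
  calc dist u v ≤ dist u (lineMap a b (dist ac uc / dist a b))
        + dist (lineMap a b (dist ac uc / dist a b)) (lineMap a c (dist ac vc / dist a c))
        + dist (lineMap a c (dist ac vc / dist a c)) v := dist_triangle4 _ _ _ _
    _ ≤ dist uc vc + 2 * √3 := by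
      linarith [add_div (dist ac uc / dist a b) (dist ac vc / dist a c) √2]

end InnerProductSpace

section PathLength

variable {X : Type*} [MetricSpace X]

theorem dist_le_pathLen {γ : ℝ → X} {s t : ℝ} (hst : s ≤ t)
    (hγ : eVariationOn γ (Set.Icc s t) ≠ ⊤) : dist (γ s) (γ t) ≤ pathLen γ s t := by
  rw [dist_edist, pathLen]
  exact ENNReal.toReal_mono hγ
    (eVariationOn.edist_le γ (Set.left_mem_Icc.2 hst) (Set.right_mem_Icc.2 hst))

theorem pathLen_add {γ : ℝ → X} {s t w : ℝ} (hst : s ≤ t) (htw : t ≤ w)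
    (hγ : eVariationOn γ (Set.Icc s w) ≠ ⊤) :
    pathLen γ s t + pathLen γ t w = pathLen γ s w := by
  have hadd := eVariationOn.Icc_add_Icc γ hst htw (Set.mem_univ t)
  simp only [Set.univ_inter] at hadd
  rw [← hadd] at hγ
  rw [pathLen, pathLen, pathLen, ← hadd, ENNReal.toReal_add (ENNReal.add_ne_top.1 hγ).1
    (ENNReal.add_ne_top.1 hγ).2]

theorem SidePoint.slackSidePoint {h : ℝ} {a b u : X} {ac bc uc : E2}
    (hu : SidePoint h a b ac bc u uc) (hab : dist ac bc = dist a b) :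
    SlackSidePoint h a b ac bc u uc := by
  obtain ⟨s, t, ⟨ht₀, htL⟩, rfl, huc, hl, hr⟩ := hu
  have finite {t₁ t₂ : ℝ} (h₁ : 0 ≤ t₁) (h₂ : t₂ ≤ s.L) :
      eVariationOn s.γ (Set.Icc t₁ t₂) ≠ ⊤ :=
    ne_top_of_le_ne_top s.rect (eVariationOn.mono _ (Set.Icc_subset_Icc h₁ h₂))
  have hau := dist_le_pathLen ht₀ (finite le_rfl htL)
  have hub := dist_le_pathLen htL (finite ht₀ le_rfl)
  rw [s.src] at hau
  rw [s.tgt] at hub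
  refine ⟨huc, ?_⟩
  calc max (dist a (s.γ t)) (dist ac uc) + max (dist (s.γ t) b) (dist uc bc)
      ≤ pathLen s.γ 0 t + pathLen s.γ t s.L := add_le_add (max_le hau hl) (max_le hub hr)
    _ = pathLen s.γ 0 s.L := pathLen_add ht₀ htL s.rect
    _ ≤ dist ac bc + h := by linarith [s.short₂]

end PathLength

def pentagonTuple {X : Type*} (a u b c v : X) : ℕ → X
  | 1 => a
  | 2 => u
  | 3 => b
  | 4 => c
  | _ => v

theorem pentagonTuple_of_five_le {X : Type*} (a u b c v : X) {k : ℕ} (hk : 5 ≤ k) :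
    pentagonTuple a u b c v k = v := by
  obtain ⟨m, rfl⟩ := Nat.exists_eq_add_of_le' hk
  rfl

section RoughNPoint

variable {X : Type*} [MetricSpace X] {C : ℝ} {n : ℕ}

theorem RoughNPoint.exists_nat_subembedding (hpt : RoughNPoint C n X) (hn : 2 ≤ n)
    (f : ℕ → X) (hf : f n = f 0) :
    ∃ f' : ℕ → E2, f' n = f' 0 ∧
      (∀ k < n, dist (f' (k + 1)) (f' k) = dist (f (k + 1)) (f k)) ∧
      (∀ k ≤ n, dist (f 1) (f k) ≤ dist (f' 1) (f' k)) ∧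
      (∀ j ≤ n, ∀ k ≤ n, j ≠ 1 → k ≠ 1 → dist (f j) (f k) ≤ dist (f' j) (f' k) + C) := by
  have : NeZero n := ⟨by omega⟩
  obtain ⟨x', hcons, hfirst, hrough⟩ := hpt fun i => f i.val
  have hval : ∀ k ≤ n, f (k : ZMod n).val = f k := by
    intro k hk
    rcases hk.lt_or_eq with hk | rfl
    · rw [ZMod.val_natCast_of_lt hk]
    · rw [ZMod.natCast_self, ZMod.val_zero, hf]
  have hne : ∀ k ≤ n, k ≠ 1 → (k : ZMod n) ≠ 1 := by
    intro k hk hk1 h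
    rw [← Nat.cast_one, ZMod.natCast_eq_natCast_iff', Nat.mod_eq_of_lt (by omega : 1 < n)]
      at h
    rcases hk.lt_or_eq with hk | rfl
    · exact hk1 (by rwa [Nat.mod_eq_of_lt hk] at h)
    · exact zero_ne_one (by rwa [Nat.mod_self] at h)
  have hone : ((1 : ℕ) : ZMod n) = 1 := Nat.cast_one
  refine ⟨fun k => x' k, by simp, fun k hk => ?_, fun k hk => ?_, fun j hj k hk hj1 hk1 => ?_⟩
  · have h := hcons ((k + 1 : ℕ) : ZMod n)
    rw [Nat.cast_succ, add_sub_cancel_right, ← Nat.cast_succ, hval (k + 1) hk,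
      hval k hk.le] at h
    exact h.symm
  · have h := hfirst k
    rwa [← hone, hval 1 (by omega), hval k hk] at h
  · have h := hrough j k (hne j hj hj1) (hne k hk hk1)
    rwa [hval j hj, hval k hk] at h

theorem RoughNPoint.exists_pentagon (hpt : RoughNPoint C n X) (hn : 5 ≤ n) (a u b c v : X) :
    ∃ a' u' b' c' v' : E2, dist a' u' ≤ dist a u ∧ dist u' b' ≤ dist u b ∧
      dist b' c' ≤ dist b c ∧ dist a' v' ≤ dist a v ∧ dist v' c' ≤ dist v c ∧
      dist a b ≤ dist a' b' ∧ dist a c ≤ dist a' c' ∧ dist u v ≤ dist u' v' + C := by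
  set f := pentagonTuple a u b c v
  have hfv : ∀ k, 5 ≤ k → f k = v := fun k hk => pentagonTuple_of_five_le a u b c v hk
  obtain ⟨f', hper, hcons, hfirst, hrough⟩ :=
    hpt.exists_nat_subembedding (by omega) f (hfv n hn)
  -- `v` fills the indices `5, …, n`, so the broken line `f' 4, f' 5, …, f' n` has length `d(c,v)`.
  have hcv : dist (f' 4) (f' 0) ≤ dist c v :=
    calc dist (f' 4) (f' 0) = dist (f' 4) (f' n) := by rw [hper]
      _ ≤ ∑ i ∈ Finset.Ico 4 n, dist (f' i) (f' (i + 1)) :=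
          dist_le_Ico_sum_dist f' (by omega)
      _ = ∑ i ∈ Finset.Ico 4 n, dist (f i) (f (i + 1)) := Finset.sum_congr rfl fun i hi => by
          rw [dist_comm, hcons i (Finset.mem_Ico.1 hi).2, dist_comm]
      _ = dist c v := by
          rw [Finset.sum_eq_single_of_mem 4 (Finset.mem_Ico.2 ⟨le_rfl, by omega⟩)]
          · rfl
          · intro i hi hi4
            obtain ⟨hi₁, -⟩ := Finset.mem_Ico.1 hi
            rw [hfv i (by omega), hfv (i + 1) (by omega), dist_self]
  refine ⟨f' 1, f' 2, f' 3, f' 4, f' 0, ?_, ?_, ?_, ?_, ?_, hfirst 3 (by omega),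
    hfirst 4 (by omega), ?_⟩
  · rw [dist_comm, hcons 1 (by omega), dist_comm]; rfl
  · rw [dist_comm, hcons 2 (by omega), dist_comm]; rfl
  · rw [dist_comm, hcons 3 (by omega), dist_comm]; rfl
  · rw [hcons 0 (by omega)]; rfl
  · rw [dist_comm]; exact hcv.trans_eq (dist_comm c v)
  · have h := hrough 2 (by omega) n le_rfl (by omega) (by omega)
    rwa [hper, hfv n hn] at h

theorem RoughNPoint.dist_le_of_slackSidePoint (hpt : RoughNPoint C n X) (hn : 5 ≤ n)
    {a b c u v : X} {ac bc cc uc vc : E2} {h : ℝ}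
    (hu : SlackSidePoint h a b ac bc u uc) (hv : SlackSidePoint h a c ac cc v vc)
    (hb : dist ac bc = dist a b) (hc : dist ac cc = dist a c) (hbc : dist bc cc = dist b c)
    (hh : h ≤ 1) (hhb : h * dist a b ≤ 1) (hhc : h * dist a c ≤ 1) (hhbc : h * dist b c ≤ 1) :
    dist u v ≤ dist uc vc + (C + 2 * √3) := by
  obtain ⟨a', u', b', c', v', hau, hub, hbc', hav, hvc, hab, hac, huv⟩ :=
    hpt.exists_pentagon hn a u b c v
  have := (hu.mono hau hub).dist_le_add_two_sqrt_three (hv.mono hav hvc) hh (hb ▸ hhb)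
    (hc ▸ hhc) (hbc ▸ hhbc) (hb ▸ hab) (hc ▸ hac) (hbc ▸ hbc')
  linarith

theorem StdH_le_one (x y z : X) : StdH x y z ≤ 1 :=
  div_le_one_of_le₀ (le_max_left _ _) (zero_le_one.trans (le_max_left _ _))

theorem StdH_mul_dist_le_one {x y z p q : X} (hp : p ∈ ({x, y, z} : Set X))
    (hq : q ∈ ({x, y, z} : Set X)) : StdH x y z * dist p q ≤ 1 := by
  rw [StdH, one_div, inv_mul_le_iff₀ (zero_lt_one.trans_le (le_max_left _ _)), mul_one]
  simp only [Set.mem_insert_iff, Set.mem_singleton_iff] at hp hq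
  rcases hp with rfl | rfl | rfl <;> rcases hq with rfl | rfl | rfl <;> simp [dist_comm]

end RoughNPoint

theorem stmt_0_general {X : Type*} [MetricSpace X]
    {n : ℕ} (hn : 5 ≤ n) {C : ℝ}
    (hpt : RoughNPoint C n X) :
    RCat (C + 2 * Real.sqrt 3) X := by
  intro x y z xc yc zc hxy hyz hzx u v uc vc hsides
  rcases hsides with ⟨hu, hv⟩ | ⟨hu, hv⟩ | ⟨hu, hv⟩
  · refine hpt.dist_le_of_slackSidePoint hn (hu.slackSidePoint hxy).symm (hv.slackSidePoint hyz)
      (by rw [dist_comm, hxy, dist_comm]) hyz (by rw [dist_comm, hzx, dist_comm])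
      (StdH_le_one x y z) ?_ ?_ ?_ <;>
    exact StdH_mul_dist_le_one (by simp) (by simp)
  · refine hpt.dist_le_of_slackSidePoint hn (hu.slackSidePoint hxy) (hv.slackSidePoint hzx).symm
      hxy (by rw [dist_comm, hzx, dist_comm]) hyz (StdH_le_one x y z) ?_ ?_ ?_ <;>
    exact StdH_mul_dist_le_one (by simp) (by simp)
  · refine hpt.dist_le_of_slackSidePoint hn (hu.slackSidePoint hyz).symm (hv.slackSidePoint hzx)
      (by rw [dist_comm, hyz, dist_comm]) hzx (by rw [dist_comm, hxy, dist_comm])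
      (StdH_le_one x y z) ?_ ?_ ?_ <;>
    exact StdH_mul_dist_le_one (by simp) (by simp)

/-- If a length space satisfies a `C`-rough `n`-point condition for some
`n ≥ 5` and `C ≥ 0`, then it is `C'`-rCAT(0) with `C' = C + 2√3`. -/
theorem stmt_0 {X : Type*} [MetricSpace X] (hX : IsLengthSpace X)
    {n : ℕ} (hn : 5 ≤ n) {C : ℝ} (hC : 0 ≤ C)
    (hpt : RoughNPoint C n X) :
    RCat (C + 2 * Real.sqrt 3) X :=
  stmt_0_general hn hpt

end
end

section
/- Let x,y be points of the Euclidean plane ℝ² with l := |x−y| > 0, fix h > 0, set L := l + h, and let γ : [0,L] → ℝ² be an h-short segment from x to y parameterized by arclength. Then there exists a map λ : [0,L] → [x,y] (where [x,y] is the Euclidean line segment from x to y) such that λ(0) = x, λ(L) = y, and for all 0 ≤ t ≤ L: |λ(t)−x| ≤ |γ(t)−x|, |λ(t)−y| ≤ |γ(t)−y|, and |γ(t)−λ(t)| ≤ M, where M := (1/2)·√(2lh + h²). -/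
noncomputable section

/-!
For `t ∈ [0, L]` the arclength parameterization gives `|γ t - x| ≤ t` and `|γ t - y| ≤ L - t`,
so `γ t` lies in the ellipse `|z - x| + |z - y| ≤ L` with foci `x, y`. Take `λ t` to be the
point of `[x, y]` nearest to `γ t`. Nearest-point projection onto a convex set does not increase
distances to points of the set, which gives the first two inequalities. For the third, with
`d = |z - p|` for the nearest point `p`, the obtuse angles at `p` give
`|z - x|² ≥ d² + |p - x|²` and `|z - y|² ≥ d² + |p - y|²`, and Minkowski's inequality in `ℝ²`
turns these into `4d² + l² ≤ (|z - x| + |z - y|)² ≤ L²`: the distance to the segment is at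
most the semi-minor axis `½√(L² - l²) = ½√(2lh + h²)`.
-/

open scoped RealInnerProductSpace

theorem four_mul_sq_add_sq_add_le_sq_add {a b d α β : ℝ} (ha : 0 ≤ a) (hb : 0 ≤ b)
    (hα : d ^ 2 + α ^ 2 ≤ a ^ 2) (hβ : d ^ 2 + β ^ 2 ≤ b ^ 2) :
    4 * d ^ 2 + (α + β) ^ 2 ≤ (a + b) ^ 2 := by
  have hprod : (d ^ 2 + α * β) ^ 2 ≤ (a * b) ^ 2 :=
    calc (d ^ 2 + α * β) ^ 2 ≤ (d ^ 2 + α ^ 2) * (d ^ 2 + β ^ 2) := by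
          nlinarith [sq_nonneg (d * (α - β))]
      _ ≤ a ^ 2 * b ^ 2 := by gcongr
      _ = (a * b) ^ 2 := by ring
  have hab : d ^ 2 + α * β ≤ a * b :=
    abs_le_of_sq_le_sq' hprod (mul_nonneg ha hb) |>.2
  nlinarith

theorem dist_le_of_pathLen_eq {X : Type*} [MetricSpace X] {γ : ℝ → X} {s t : ℝ} (hst : s ≤ t)
    (hlen : pathLen γ s t = t - s) : dist (γ s) (γ t) ≤ t - s := by
  rcases hst.eq_or_lt with rfl | hlt
  · simp
  have hfin : eVariationOn γ (Set.Icc s t) ≠ ⊤ := by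
    intro htop
    rw [pathLen, htop, ENNReal.toReal_top] at hlen
    linarith
  rw [← hlen, dist_edist, pathLen]
  exact ENNReal.toReal_mono hfin (eVariationOn.edist_le γ ⟨le_rfl, hst⟩ ⟨hst, le_rfl⟩)

section SegmentNearest

variable {V : Type*} [NormedAddCommGroup V] [InnerProductSpace ℝ V]

theorem norm_sub_sq_add_norm_sub_sq_le_of_inner_nonpos {z p q : V}
    (h : ⟪z - p, q - p⟫ ≤ 0) : ‖z - p‖ ^ 2 + ‖q - p‖ ^ 2 ≤ ‖z - q‖ ^ 2 := by
  have hsplit : z - q = (z - p) - (q - p) := by abel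
  rw [hsplit, norm_sub_sq_real (z - p) (q - p)]
  linarith

theorem exists_mem_segment_forall_inner_nonpos (x y z : V) :
    ∃ p ∈ segment ℝ x y, ∀ q ∈ segment ℝ x y, ⟪z - p, q - p⟫ ≤ 0 := by
  have hcompact : IsCompact (segment ℝ x y) := by
    rw [← convexHull_pair]
    exact (Set.toFinite _).isCompact_convexHull ℝ
  obtain ⟨p, hp, hmin⟩ := exists_norm_eq_iInf_of_complete_convex
    ⟨x, left_mem_segment ℝ x y⟩ hcompact.isComplete (convex_segment x y) z
  exact ⟨p, hp, (norm_eq_iInf_iff_real_inner_le_zero (convex_segment x y) hp).1 hmin⟩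

def segmentNearest (x y z : V) : V :=
  (exists_mem_segment_forall_inner_nonpos x y z).choose

variable {x y z q : V}

theorem segmentNearest_mem : segmentNearest x y z ∈ segment ℝ x y :=
  (exists_mem_segment_forall_inner_nonpos x y z).choose_spec.1

theorem sq_dist_segmentNearest_add_sq_le (hq : q ∈ segment ℝ x y) :
    dist z (segmentNearest x y z) ^ 2 + dist q (segmentNearest x y z) ^ 2 ≤ dist z q ^ 2 := by
  simp only [dist_eq_norm]
  exact norm_sub_sq_add_norm_sub_sq_le_of_inner_nonpos
    ((exists_mem_segment_forall_inner_nonpos x y z).choose_spec.2 q hq)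

theorem dist_segmentNearest_le (hq : q ∈ segment ℝ x y) :
    dist (segmentNearest x y z) q ≤ dist z q := by
  have h := sq_dist_segmentNearest_add_sq_le (z := z) hq
  rw [dist_comm q] at h
  exact (pow_le_pow_iff_left₀ dist_nonneg dist_nonneg two_ne_zero).1
    (by linarith [sq_nonneg (dist z (segmentNearest x y z))])

theorem segmentNearest_eq_self (hz : z ∈ segment ℝ x y) : segmentNearest x y z = z := by
  have h := sq_dist_segmentNearest_add_sq_le (z := z) hz
  rw [dist_self] at h
  exact (dist_eq_zero.1 (by nlinarith [sq_nonneg (dist z (segmentNearest x y z))])).symm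

theorem four_mul_sq_dist_segmentNearest_add_sq_le (x y z : V) :
    4 * dist z (segmentNearest x y z) ^ 2 + dist x y ^ 2 ≤ (dist z x + dist z y) ^ 2 := by
  rw [← dist_add_dist_of_mem_segment (segmentNearest_mem (x := x) (y := y) (z := z)),
    dist_comm (segmentNearest x y z) y]
  exact four_mul_sq_add_sq_add_le_sq_add dist_nonneg dist_nonneg
    (sq_dist_segmentNearest_add_sq_le (left_mem_segment ℝ x y))
    (sq_dist_segmentNearest_add_sq_le (right_mem_segment ℝ x y))

end SegmentNearest

theorem stmt_5_general (x y : E2) (h : ℝ)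
    (γ : ℝ → E2) (hsrc : γ 0 = x) (htgt : γ (dist x y + h) = y)
    (harc : ∀ s t : ℝ, 0 ≤ s → s ≤ t → t ≤ dist x y + h → pathLen γ s t = t - s) :
    ∃ lam : ℝ → E2, lam 0 = x ∧ lam (dist x y + h) = y ∧
      ∀ t ∈ Set.Icc (0 : ℝ) (dist x y + h),
        lam t ∈ segment ℝ x y ∧
        dist (lam t) x ≤ dist (γ t) x ∧
        dist (lam t) y ≤ dist (γ t) y ∧
        dist (γ t) (lam t) ≤ (1 / 2) * Real.sqrt (2 * dist x y * h + h ^ 2) := by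
  refine ⟨fun t => segmentNearest x y (γ t), ?_, ?_, fun t ⟨ht0, htL⟩ => ?_⟩
  · simp only [hsrc, segmentNearest_eq_self (left_mem_segment ℝ x y)]
  · simp only [htgt, segmentNearest_eq_self (right_mem_segment ℝ x y)]
  have hx : dist (γ t) x ≤ t := by
    simpa [hsrc, dist_comm] using dist_le_of_pathLen_eq ht0 (harc 0 t le_rfl ht0 htL)
  have hy : dist (γ t) y ≤ dist x y + h - t := by
    simpa [htgt] using dist_le_of_pathLen_eq htL (harc t _ ht0 htL le_rfl)
  refine ⟨segmentNearest_mem, dist_segmentNearest_le (left_mem_segment ℝ x y),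
    dist_segmentNearest_le (right_mem_segment ℝ x y), ?_⟩
  have hellipse := four_mul_sq_dist_segmentNearest_add_sq_le x y (γ t)
  have hsum : (dist (γ t) x + dist (γ t) y) ^ 2 ≤ (dist x y + h) ^ 2 :=
    pow_le_pow_left₀ (by positivity) (by linarith) 2
  have hbound : (2 * dist (γ t) (segmentNearest x y (γ t))) ^ 2 ≤ 2 * dist x y * h + h ^ 2 := by
    nlinarith
  linarith [Real.le_sqrt_of_sq_le hbound]

/-- (Lemma 3.1) If `γ : [0, L] → ℝ²`, `L = l + h` with `l = |x-y| > 0`,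
is an `h`-short segment from `x` to `y` parameterized by arclength, then there is a map
`lam : [0,L] → [x,y]` with `lam 0 = x`, `lam L = y`, `|lam t - x| ≤ |γ t - x|`,
`|lam t - y| ≤ |γ t - y|` and `|γ t - lam t| ≤ (1/2)√(2lh + h²)` for all `t ∈ [0,L]`. -/
theorem stmt_5 (x y : E2) (hl : 0 < dist x y) (h : ℝ) (hh : 0 < h)
    (γ : ℝ → E2) (hsrc : γ 0 = x) (htgt : γ (dist x y + h) = y)
    (harc : ∀ s t : ℝ, 0 ≤ s → s ≤ t → t ≤ dist x y + h → pathLen γ s t = t - s) :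
    ∃ lam : ℝ → E2, lam 0 = x ∧ lam (dist x y + h) = y ∧
      ∀ t ∈ Set.Icc (0 : ℝ) (dist x y + h),
        lam t ∈ segment ℝ x y ∧
        dist (lam t) x ≤ dist (γ t) x ∧
        dist (lam t) y ≤ dist (γ t) y ∧
        dist (γ t) (lam t) ≤ (1 / 2) * Real.sqrt (2 * dist x y * h + h ^ 2) :=
  stmt_5_general x y h γ hsrc htgt harc

end
end

section
/- Let x,y be points of the Euclidean plane ℝ² with l := |x−y| > 0, let 0 < ε ≤ 1, set h := ε/(1 ∨ l) and L := l + h, and let γ : [0,L] → ℝ² be an h-short segment from x to y parameterized by arclength. Then there exists a map λ : [0,L] → [x,y] (the Euclidean line segment from x to y) such that λ(0) = x, λ(L) = y, |λ(t)−x| ≤ |γ(t)−x| and |λ(t)−y| ≤ |γ(t)−y| for all 0 ≤ t ≤ L, and |γ(t)−λ(t)| ≤ √(3ε)/2 for all 0 ≤ t ≤ L. -/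
/-!
An arclength path of length `l + h` from `x` to `y` satisfies `|γ t - x| + |γ t - y| ≤ l + h`,
so `γ t` lies in a thin ellipse with foci `x`, `y`. Take for `λ t` the point of `[x, y]` at
distance `(y · γ t)ₓ` (the Gromov product) from `x`, i.e. the centre of the tripod of the
triangle `x, y, γ t`. Its distances to `x` and `y` are the tripod legs, hence at most those of
`γ t`, and the law of cosines gives `|γ t - λ t|² ≤ ((l + h)² - l²) / 4 ≤ 3ε / 4`.
-/

noncomputable section

open AffineMap Set

section Tripod

variable {E : Type*} [NormedAddCommGroup E]

/-- The Gromov product `(y · p)ₓ`. -/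
def gromovProduct (x y p : E) : ℝ :=
  (dist x y + dist x p - dist y p) / 2

/-- The point of `[x, y]` at distance `(y · p)ₓ` from `x` (it is `x` when `x = y`). -/
def tripodPoint [NormedSpace ℝ E] (x y p : E) : E :=
  lineMap x y (gromovProduct x y p / dist x y)

lemma gromovProduct_nonneg (x y p : E) : 0 ≤ gromovProduct x y p := by
  unfold gromovProduct; linarith [dist_triangle y x p, dist_comm x y]

lemma gromovProduct_le_dist (x y p : E) : gromovProduct x y p ≤ dist x y := by
  unfold gromovProduct; linarith [dist_triangle x y p, dist_comm x p]

variable [NormedSpace ℝ E] {x y : E}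

@[simp]
lemma tripodPoint_left (x y : E) : tripodPoint x y x = x := by
  simp [tripodPoint, gromovProduct, dist_comm x y]

@[simp]
lemma tripodPoint_right (hxy : x ≠ y) : tripodPoint x y y = y := by
  simp [tripodPoint, gromovProduct, div_self (dist_ne_zero.2 hxy)]

lemma tripodPoint_mem_segment (hxy : x ≠ y) (p : E) : tripodPoint x y p ∈ segment ℝ x y := by
  have hl := dist_pos.2 hxy
  rw [segment_eq_image_lineMap]
  exact ⟨_, ⟨div_nonneg (gromovProduct_nonneg x y p) hl.le,
    div_le_one_of_le₀ (gromovProduct_le_dist x y p) hl.le⟩, rfl⟩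

lemma dist_tripodPoint_left (hxy : x ≠ y) (p : E) :
    dist (tripodPoint x y p) x = gromovProduct x y p := by
  rw [tripodPoint, dist_lineMap_left, Real.norm_of_nonneg
    (div_nonneg (gromovProduct_nonneg x y p) dist_nonneg), div_mul_cancel₀ _ (dist_ne_zero.2 hxy)]

lemma dist_tripodPoint_right (hxy : x ≠ y) (p : E) :
    dist (tripodPoint x y p) y = dist x y - gromovProduct x y p := by
  have hl := dist_pos.2 hxy
  rw [tripodPoint, dist_lineMap_right, Real.norm_of_nonneg
    (sub_nonneg.2 (div_le_one_of_le₀ (gromovProduct_le_dist x y p) hl.le)), sub_mul,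
    div_mul_cancel₀ _ hl.ne', one_mul]

lemma dist_tripodPoint_left_le (hxy : x ≠ y) (p : E) :
    dist (tripodPoint x y p) x ≤ dist p x := by
  rw [dist_tripodPoint_left hxy, gromovProduct]
  linarith [dist_triangle x p y, dist_comm x p, dist_comm y p]

lemma dist_tripodPoint_right_le (hxy : x ≠ y) (p : E) :
    dist (tripodPoint x y p) y ≤ dist p y := by
  rw [dist_tripodPoint_right hxy, gromovProduct]
  linarith [dist_triangle x p y, dist_comm x p, dist_comm y p]

end Tripod

section InnerProduct

variable {E : Type*} [NormedAddCommGroup E] [InnerProductSpace ℝ E] {x y : E}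

open RealInnerProductSpace in
/-- With `d₁ = |p - x|`, `d₂ = |p - y|`, `l = |x - y|`, the law of cosines gives
`l |p - λ|² = l ((d₁ + d₂)² - l²) / 4 - (d₁ - d₂)² (d₁ + d₂ - l) / 2`. -/
lemma dist_tripodPoint_sq_le (hxy : x ≠ y) (p : E) :
    dist p (tripodPoint x y p) ^ 2 ≤ ((dist p x + dist p y) ^ 2 - dist x y ^ 2) / 4 := by
  set d₁ := dist p x
  set d₂ := dist p y
  set l := dist x y
  have hl : 0 < l := dist_pos.2 hxy
  have hP : ‖p - x‖ = d₁ := (dist_eq_norm p x).symm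
  have hY : ‖y - x‖ = l := by rw [← dist_eq_norm, dist_comm]
  have hcos : 2 * ⟪p - x, y - x⟫ = d₁ ^ 2 + l ^ 2 - d₂ ^ 2 := by
    have h := norm_sub_sq_real (p - x) (y - x)
    rw [sub_sub_sub_cancel_right, ← dist_eq_norm, hP, hY] at h
    linarith
  have hsq : dist p (tripodPoint x y p) ^ 2
      = ((d₁ + d₂) ^ 2 - l ^ 2) / 4 - (d₁ - d₂) ^ 2 * (d₁ + d₂ - l) / (2 * l) := by
    have hg : gromovProduct x y p / dist x y = (l + d₁ - d₂) / (2 * l) := by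
      rw [gromovProduct, dist_comm x p, dist_comm y p, div_div]
    rw [dist_eq_norm, tripodPoint, lineMap_apply_module', sub_add_eq_sub_sub_swap,
      norm_sub_sq_real, norm_smul, real_inner_smul_right, mul_pow, Real.norm_eq_abs, sq_abs,
      hP, hY, hg]
    field_simp
    linear_combination (-8 * (l + d₁ - d₂)) * hcos
  have htri : l ≤ d₁ + d₂ := by linarith [dist_triangle x p y, dist_comm x p]
  rw [hsq]
  have : 0 ≤ (d₁ - d₂) ^ 2 * (d₁ + d₂ - l) / (2 * l) := by
    have := sub_nonneg.2 htri
    positivity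
  linarith

lemma dist_tripodPoint_le_of_add_le (hxy : x ≠ y) {p : E} {s : ℝ}
    (hs : dist p x + dist p y ≤ s) :
    dist p (tripodPoint x y p) ≤ √(s ^ 2 - dist x y ^ 2) / 2 := by
  rw [le_div_iff₀ two_pos]
  refine Real.le_sqrt_of_sq_le ?_
  have h0 : 0 ≤ dist p x + dist p y := by positivity
  nlinarith [dist_tripodPoint_sq_le hxy p, mul_self_le_mul_self h0 hs]

end InnerProduct

section Arclength

variable {X : Type*} [MetricSpace X] {γ : ℝ → X}

lemma dist_le_of_pathLen_eq_sub {a b : ℝ} (hab : a ≤ b) (h : pathLen γ a b = b - a) :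
    dist (γ a) (γ b) ≤ b - a := by
  by_cases hV : eVariationOn γ (Icc a b) = ⊤
  · rw [pathLen, hV, ENNReal.toReal_top] at h
    obtain rfl : b = a := by linarith
    simp
  · rw [← h, dist_edist]
    exact ENNReal.toReal_mono hV (eVariationOn.edist_le γ ⟨le_rfl, hab⟩ ⟨hab, le_rfl⟩)

lemma dist_add_dist_le_of_pathLen_eq {L t : ℝ}
    (harc : ∀ s t : ℝ, 0 ≤ s → s ≤ t → t ≤ L → pathLen γ s t = t - s) (ht : t ∈ Icc 0 L) :
    dist (γ t) (γ 0) + dist (γ t) (γ L) ≤ L := by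
  have h₁ := dist_le_of_pathLen_eq_sub ht.1 (harc 0 t le_rfl ht.1 ht.2)
  have h₂ := dist_le_of_pathLen_eq_sub ht.2 (harc t L ht.1 ht.2 le_rfl)
  rw [dist_comm] at h₁
  linarith

end Arclength

lemma add_div_max_one_sq_sub_sq_le {l ε : ℝ} (hε0 : 0 ≤ ε) (hε1 : ε ≤ 1) :
    (l + ε / max 1 l) ^ 2 - l ^ 2 ≤ 3 * ε := by
  have hm : 0 < max 1 l := lt_max_of_lt_left one_pos
  set h := ε / max 1 l
  have hh0 : 0 ≤ h := by positivity
  have hhε : h ≤ ε := div_le_self hε0 (le_max_left 1 l)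
  have hlh : l * h ≤ ε :=
    calc l * h ≤ max 1 l * h := by gcongr; exact le_max_right 1 l
      _ = ε := mul_div_cancel₀ ε hm.ne'
  nlinarith

/-- The special case of Lemma 3.1 with `h = ε/(1 ∨ l)`, `0 < ε ≤ 1`:
the distance bound becomes `√(3ε)/2`. -/
theorem stmt_6 (x y : E2) (hl : 0 < dist x y) (ε : ℝ) (hε0 : 0 < ε) (hε1 : ε ≤ 1)
    (γ : ℝ → E2) (hsrc : γ 0 = x)
    (htgt : γ (dist x y + ε / max 1 (dist x y)) = y)
    (harc : ∀ s t : ℝ, 0 ≤ s → s ≤ t → t ≤ dist x y + ε / max 1 (dist x y) →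
      pathLen γ s t = t - s) :
    ∃ lam : ℝ → E2, lam 0 = x ∧ lam (dist x y + ε / max 1 (dist x y)) = y ∧
      ∀ t ∈ Set.Icc (0 : ℝ) (dist x y + ε / max 1 (dist x y)),
        lam t ∈ segment ℝ x y ∧
        dist (lam t) x ≤ dist (γ t) x ∧
        dist (lam t) y ≤ dist (γ t) y ∧
        dist (γ t) (lam t) ≤ Real.sqrt (3 * ε) / 2 := by
  have hxy : x ≠ y := dist_pos.1 hl
  set L := dist x y + ε / max 1 (dist x y)
  refine ⟨fun t => tripodPoint x y (γ t), by simp [hsrc], by simp [htgt, hxy], fun t ht => ?_⟩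
  have hsum : dist (γ t) x + dist (γ t) y ≤ L := by
    simpa only [hsrc, htgt] using dist_add_dist_le_of_pathLen_eq harc ht
  refine ⟨tripodPoint_mem_segment hxy _, dist_tripodPoint_left_le hxy _,
    dist_tripodPoint_right_le hxy _, ?_⟩
  calc dist (γ t) (tripodPoint x y (γ t)) ≤ √(L ^ 2 - dist x y ^ 2) / 2 :=
        dist_tripodPoint_le_of_add_le hxy hsum
    _ ≤ √(3 * ε) / 2 := by
        gcongr
        exact add_div_max_one_sq_sub_sq_le hε0.le hε1

end
end

section
/- Let x₀,x₁,x₂,x₀',x₁',x₂' ∈ ℝ² (the Euclidean plane), let u_i ∈ [x₀,x_i] and u_i' ∈ [x₀',x_i'] for i = 1,2 (points on the Euclidean line segments), and let h = ε/(1 ∨ |x₀'−x₁'| ∨ |x₀'−x₂'|) for some 0 < ε ≤ 1. Suppose |x₁−x₂| = |x₁'−x₂'|, that |x₀'−x_i'| ≤ |x₀−x_i| ≤ |x₀'−x_i'| + h for i = 1,2, and that |u_i−x₀|/|x₀−x_i| = |u_i'−x₀'|/|x₀'−x_i'| for i = 1,2. Then |u₁−u₂| ≤ |u₁'−u₂'|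 + √(3ε). -/
/-!
Write `uᵢ = x₀ + tᵢ (xᵢ - x₀)`; the ratio condition says the primed points use the same
parameters `tᵢ ∈ [0,1]`. An identity of Stewart type expresses `|u₁ - u₂|²` as
`t₁(t₁-t₂)|x₀-x₁|² + t₂(t₂-t₁)|x₀-x₂|² + t₁t₂|x₁-x₂|²`, so, the third sides being equal,
`|u₁ - u₂|² - |u₁' - u₂'|² = t₁(t₁-t₂)Δ₁ + t₂(t₂-t₁)Δ₂` with `Δᵢ = |x₀-xᵢ|² - |x₀'-xᵢ'|²`.
One of the two terms is nonpositive and the other is at most `max Δ₁ Δ₂`, and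
`Δᵢ ≤ 2|x₀'-xᵢ'| h + h² ≤ 3ε` by the choice of `h`.
-/

noncomputable section

open AffineMap Set

section InnerProductSpace

variable {V : Type*} [NormedAddCommGroup V] [InnerProductSpace ℝ V]

theorem dist_lineMap_lineMap_sq_s7 (x₀ x₁ x₂ : V) (t₁ t₂ : ℝ) :
    dist (lineMap x₀ x₁ t₁) (lineMap x₀ x₂ t₂) ^ 2 =
      t₁ * (t₁ - t₂) * dist x₀ x₁ ^ 2 + t₂ * (t₂ - t₁) * dist x₀ x₂ ^ 2
        + t₁ * t₂ * dist x₁ x₂ ^ 2 := by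
  have hsub : lineMap x₀ x₁ t₁ - lineMap x₀ x₂ t₂ = t₁ • (x₁ - x₀) - t₂ • (x₂ - x₀) := by
    simp only [lineMap_apply_module']
    abel
  have h₁₂ : x₁ - x₂ = (x₁ - x₀) - (x₂ - x₀) := by abel
  rw [dist_eq_norm, hsub, dist_comm x₀ x₁, dist_comm x₀ x₂, dist_eq_norm, dist_eq_norm,
    dist_eq_norm, h₁₂, norm_sub_sq_real, norm_sub_sq_real (x₁ - x₀), norm_smul, norm_smul,
    real_inner_smul_left, real_inner_smul_right, Real.norm_eq_abs, Real.norm_eq_abs,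
    mul_pow, mul_pow, sq_abs, sq_abs]
  ring

theorem dist_lineMap_lineMap_sq_le {x₀ x₁ x₂ y₀ y₁ y₂ : V} {t₁ t₂ δ : ℝ}
    (ht₁ : t₁ ∈ Icc (0 : ℝ) 1) (ht₂ : t₂ ∈ Icc (0 : ℝ) 1) (h₁₂ : dist x₁ x₂ = dist y₁ y₂)
    (hlow₁ : dist y₀ y₁ ≤ dist x₀ x₁) (hupp₁ : dist x₀ x₁ ^ 2 ≤ dist y₀ y₁ ^ 2 + δ)
    (hlow₂ : dist y₀ y₂ ≤ dist x₀ x₂) (hupp₂ : dist x₀ x₂ ^ 2 ≤ dist y₀ y₂ ^ 2 + δ) :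
    dist (lineMap x₀ x₁ t₁) (lineMap x₀ x₂ t₂) ^ 2 ≤
      dist (lineMap y₀ y₁ t₁) (lineMap y₀ y₂ t₂) ^ 2 + δ := by
  obtain ⟨ht₁0, ht₁1⟩ := ht₁
  obtain ⟨ht₂0, ht₂1⟩ := ht₂
  have hΔ₁ : 0 ≤ dist x₀ x₁ ^ 2 - dist y₀ y₁ ^ 2 :=
    sub_nonneg.mpr (pow_le_pow_left₀ dist_nonneg hlow₁ 2)
  have hΔ₂ : 0 ≤ dist x₀ x₂ ^ 2 - dist y₀ y₂ ^ 2 :=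
    sub_nonneg.mpr (pow_le_pow_left₀ dist_nonneg hlow₂ 2)
  rw [dist_lineMap_lineMap_sq_s7, dist_lineMap_lineMap_sq_s7, h₁₂]
  rcases le_total t₂ t₁ with ht | ht
  · have hc : t₁ * (t₁ - t₂) ≤ 1 := mul_le_one₀ ht₁1 (by linarith) (by linarith)
    nlinarith [mul_nonneg ht₂0 (sub_nonneg.mpr ht), mul_nonneg ht₁0 (sub_nonneg.mpr ht)]
  · have hc : t₂ * (t₂ - t₁) ≤ 1 := mul_le_one₀ ht₂1 (by linarith) (by linarith)
    nlinarith [mul_nonneg ht₁0 (sub_nonneg.mpr ht), mul_nonneg ht₂0 (sub_nonneg.mpr ht)]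

end InnerProductSpace

section Segment

variable {E : Type*} [NormedAddCommGroup E] [NormedSpace ℝ E] {x y u : E}

/-- For `x = y` the ratio is the junk value `0`, which still works since `lineMap x x = x`. -/
theorem lineMap_dist_div_dist_of_mem_segment (hu : u ∈ segment ℝ x y) :
    lineMap x y (dist u x / dist x y) = u := by
  rw [segment_eq_image_lineMap] at hu
  obtain ⟨t, ⟨ht0, -⟩, rfl⟩ := hu
  rcases eq_or_ne x y with rfl | hxy
  · simp only [lineMap_same_apply]
  · rw [dist_lineMap_left, Real.norm_eq_abs, abs_of_nonneg ht0,
      mul_div_cancel_right₀ _ (dist_ne_zero.mpr hxy)]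

theorem dist_div_dist_mem_Icc_of_mem_segment (hu : u ∈ segment ℝ x y) :
    dist u x / dist x y ∈ Icc (0 : ℝ) 1 := by
  rw [segment_eq_image_lineMap] at hu
  obtain ⟨t, ⟨ht0, ht1⟩, rfl⟩ := hu
  rw [dist_lineMap_left, Real.norm_eq_abs, abs_of_nonneg ht0]
  rcases eq_or_ne x y with rfl | hxy
  · simp
  · rw [mul_div_cancel_right₀ _ (dist_ne_zero.mpr hxy)]
    exact ⟨ht0, ht1⟩

end Segment

theorem sq_le_sq_add_of_le_add_div {a b ε M : ℝ} (hb : 0 ≤ b) (hbM : b ≤ M) (hM : 1 ≤ M)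
    (hε : ε ≤ 1) (hba : b ≤ a) (hab : a ≤ b + ε / M) : a ^ 2 ≤ b ^ 2 + 3 * ε := by
  have hhM : ε / M * M = ε := div_mul_cancel₀ ε (by positivity)
  have hh : 0 ≤ ε / M := by linarith
  have hh1 : ε / M ≤ 1 := (div_le_one₀ (by positivity)).mpr (by linarith)
  nlinarith [mul_le_mul_of_nonneg_right hbM hh, mul_le_mul_of_nonneg_left hM hh]

theorem le_add_sqrt_of_sq_le_sq_add {a b c : ℝ} (hb : 0 ≤ b) (h : a ^ 2 ≤ b ^ 2 + c) :
    a ≤ b + √c := by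
  have hsq : b ^ 2 + c ≤ (b + √c) ^ 2 := by
    rcases le_or_gt 0 c with hc | hc
    · nlinarith [Real.sq_sqrt hc, Real.sqrt_nonneg c]
    · rw [Real.sqrt_eq_zero'.mpr hc.le]
      linarith
  calc a ≤ |a| := le_abs_self a
    _ = √(a ^ 2) := (Real.sqrt_sq_eq_abs a).symm
    _ ≤ √((b + √c) ^ 2) := Real.sqrt_le_sqrt (h.trans hsq)
    _ = b + √c := Real.sqrt_sq (by positivity)

theorem stmt_7_general (x₀ x₁ x₂ x₀' x₁' x₂' u₁ u₂ u₁' u₂' : E2)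
    (hu₁ : u₁ ∈ segment ℝ x₀ x₁) (hu₂ : u₂ ∈ segment ℝ x₀ x₂)
    (hu₁' : u₁' ∈ segment ℝ x₀' x₁') (hu₂' : u₂' ∈ segment ℝ x₀' x₂')
    (ε : ℝ) (hε1 : ε ≤ 1)
    (heq : dist x₁ x₂ = dist x₁' x₂')
    (hlow₁ : dist x₀' x₁' ≤ dist x₀ x₁)
    (hupp₁ : dist x₀ x₁ ≤ dist x₀' x₁' + ε / max 1 (max (dist x₀' x₁') (dist x₀' x₂')))
    (hlow₂ : dist x₀' x₂' ≤ dist x₀ x₂)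
    (hupp₂ : dist x₀ x₂ ≤ dist x₀' x₂' + ε / max 1 (max (dist x₀' x₁') (dist x₀' x₂')))
    (hr₁ : dist u₁ x₀ / dist x₀ x₁ = dist u₁' x₀' / dist x₀' x₁')
    (hr₂ : dist u₂ x₀ / dist x₀ x₂ = dist u₂' x₀' / dist x₀' x₂') :
    dist u₁ u₂ ≤ dist u₁' u₂' + Real.sqrt (3 * ε) := by
  have hM : (1 : ℝ) ≤ max 1 (max (dist x₀' x₁') (dist x₀' x₂')) := le_max_left _ _
  have hM₁ : dist x₀' x₁' ≤ max 1 (max (dist x₀' x₁') (dist x₀' x₂')) :=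
    (le_max_left _ _).trans (le_max_right _ _)
  have hM₂ : dist x₀' x₂' ≤ max 1 (max (dist x₀' x₁') (dist x₀' x₂')) :=
    (le_max_right _ _).trans (le_max_right _ _)
  have hsq := dist_lineMap_lineMap_sq_le
    (dist_div_dist_mem_Icc_of_mem_segment hu₁) (dist_div_dist_mem_Icc_of_mem_segment hu₂) heq
    hlow₁ (sq_le_sq_add_of_le_add_div dist_nonneg hM₁ hM hε1 hlow₁ hupp₁)
    hlow₂ (sq_le_sq_add_of_le_add_div dist_nonneg hM₂ hM hε1 hlow₂ hupp₂)
  rw [lineMap_dist_div_dist_of_mem_segment hu₁, lineMap_dist_div_dist_of_mem_segment hu₂,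
    hr₁, hr₂, lineMap_dist_div_dist_of_mem_segment hu₁',
    lineMap_dist_div_dist_of_mem_segment hu₂'] at hsq
  exact le_add_sqrt_of_sq_le_sq_add dist_nonneg hsq

/-- (Lemma 3.2) the Euclidean triangle comparison lemma. -/
theorem stmt_7 (x₀ x₁ x₂ x₀' x₁' x₂' u₁ u₂ u₁' u₂' : E2)
    (hu₁ : u₁ ∈ segment ℝ x₀ x₁) (hu₂ : u₂ ∈ segment ℝ x₀ x₂)
    (hu₁' : u₁' ∈ segment ℝ x₀' x₁') (hu₂' : u₂' ∈ segment ℝ x₀' x₂')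
    (ε : ℝ) (hε0 : 0 < ε) (hε1 : ε ≤ 1)
    (hne₁ : x₀ ≠ x₁) (hne₂ : x₀ ≠ x₂) (hne₁' : x₀' ≠ x₁') (hne₂' : x₀' ≠ x₂')
    (heq : dist x₁ x₂ = dist x₁' x₂')
    (hlow₁ : dist x₀' x₁' ≤ dist x₀ x₁)
    (hupp₁ : dist x₀ x₁ ≤ dist x₀' x₁' + ε / max 1 (max (dist x₀' x₁') (dist x₀' x₂')))
    (hlow₂ : dist x₀' x₂' ≤ dist x₀ x₂)
    (hupp₂ : dist x₀ x₂ ≤ dist x₀' x₂' + ε / max 1 (max (dist x₀' x₁') (dist x₀' x₂')))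
    (hr₁ : dist u₁ x₀ / dist x₀ x₁ = dist u₁' x₀' / dist x₀' x₁')
    (hr₂ : dist u₂ x₀ / dist x₀ x₂ = dist u₂' x₀' / dist x₀' x₂') :
    dist u₁ u₂ ≤ dist u₁' u₂' + Real.sqrt (3 * ε) :=
  stmt_7_general x₀ x₁ x₂ x₀' x₁' x₂' u₁ u₂ u₁' u₂' hu₁ hu₂ hu₁' hu₂' ε hε1 heq hlow₁ hupp₁ hlow₂
    hupp₂ hr₁ hr₂
end
end
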